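/- arXiv:1202.6638 — 2 statements merged into one kernel-verified Lean document; each statement's English description precedes it below -/
import Mathlib

section
/- Let Ω ⊆ ℂ^N be a bounded convex domain. Then for every boundary point a ∈ ∂Ω there exists a peak function for a (a holomorphic F : Ω → ℂ with |F| < 1 on Ω and F(z) → 1 as z → a, z ∈ Ω), and consequently for every z₀ ∈ Ω one has lim_{z → ∂Ω} c_Ω(z, z₀) = ∞, i.e. for every M > 0 there exists a compact set L ⊆ Ω such that c_Ω(z, z₀) > M for all z ∈ Ω \ L. -/
/-!
A point `a ∉ Ω` is separated from the convex open set `Ω` by a complex-linear `g` with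
`Re g < Re g a` on `Ω`. Then `exp (g - g a)` peaks at `a`, and the Cayley map of the half-plane
`Re ζ < 0` sending `g z₀ - g a` to `0`, composed with `g - g a`, is a competitor for
`c*_Ω(z, z₀)` of modulus at least `1 - 4 dist(z, a) / r` whenever `closedBall z₀ r ⊆ Ω`.
So `c*_Ω(z, z₀) → 1` uniformly as `z → ∂Ω`.

Since `log ((1 + m) / (1 - m))` is `log 0 = 0` at `m = 1`, one also needs `c*_Ω(z, z₀) < 1`:
Borel–Carathéodory, applied to `-(1 - F)⁻¹` on a chain of complex discs centred on the
segment `[z₀, z]`, bounds `‖(1 - F z)⁻¹‖` uniformly in `F`.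
-/

open Set Filter Topology Metric

noncomputable section

/-- ℂ^N -/
abbrev CN (N : ℕ) := Fin N → ℂ

/-- A domain: a nonempty open connected set. -/
def CNDomain {N : ℕ} (Ω : Set (CN N)) : Prop :=
  IsOpen Ω ∧ IsConnected Ω

/-- The holomorphic hull of `K` with respect to `Ω`. -/
def holHull {N : ℕ} (Ω K : Set (CN N)) : Set (CN N) :=
  {z | z ∈ Ω ∧ ∀ f : CN N → ℂ, DifferentiableOn ℂ f Ω → ‖f z‖ ≤ ⨆ w ∈ K, ‖f w‖}

/-- `K` is `Ω`-convex if it equals its holomorphic hull w.r.t. `Ω`. -/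
def OmegaConvex {N : ℕ} (Ω K : Set (CN N)) : Prop := holHull Ω K = K

/-- Pseudoconvexity, via the solution of the Levi problem: holomorphic convexity. -/
def Pseudoconvex {N : ℕ} (Ω : Set (CN N)) : Prop :=
  ∀ K : Set (CN N), K ⊆ Ω → IsCompact K → IsCompact (holHull Ω K)

/-- The hull of a compact set `A ⊆ ℂ` with respect to entire functions. -/
def entireHull (A : Set ℂ) : Set ℂ :=
  {w | ∀ f : ℂ → ℂ, Differentiable ℂ f → ‖f w‖ ≤ ⨆ a ∈ A, ‖f a‖}

/-- `U` is a Runge domain with respect to `Ω`: every function holomorphic on `U` is a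
locally uniform limit on `U` of (restrictions of) functions holomorphic on `Ω`. -/
def RungeIn {N : ℕ} (U Ω : Set (CN N)) : Prop :=
  ∀ f : CN N → ℂ, DifferentiableOn ℂ f U →
    ∀ K : Set (CN N), K ⊆ U → IsCompact K → ∀ ε : ℝ, 0 < ε →
      ∃ g : CN N → ℂ, DifferentiableOn ℂ g Ω ∧ ∀ z ∈ K, ‖g z - f z‖ < ε

/-- `C_φ` is hypercyclic with respect to the sequence `(n l)`. -/
def HypercyclicWrt {N : ℕ} (Ω : Set (CN N)) (φ : CN N → CN N) (n : ℕ → ℕ) : Prop :=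
  ∃ f : CN N → ℂ, DifferentiableOn ℂ f Ω ∧
    ∀ g : CN N → ℂ, DifferentiableOn ℂ g Ω →
      ∀ K : Set (CN N), K ⊆ Ω → IsCompact K → ∀ ε : ℝ, 0 < ε →
        ∃ l : ℕ, ∀ z ∈ K, ‖f (φ^[n l] z) - g z‖ < ε

/-- `C_φ` is hereditarily hypercyclic with respect to `(n l)`:
it is hypercyclic with respect to every subsequence. -/
def HereditarilyHypercyclicWrt {N : ℕ} (Ω : Set (CN N)) (φ : CN N → CN N) (n : ℕ → ℕ) : Prop :=
  ∀ k : ℕ → ℕ, StrictMono k → HypercyclicWrt Ω φ (n ∘ k)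

/-- A sequence of self-maps of `Ω` is run-away. -/
def RunAway {N : ℕ} (Ω : Set (CN N)) (f : ℕ → CN N → CN N) : Prop :=
  ∀ K : Set (CN N), K ⊆ Ω → IsCompact K → ∀ L : Set (CN N), L ⊆ Ω → IsCompact L →
    ∃ l : ℕ, Disjoint (f l '' K) L

/-- A sequence of self-maps of `Ω` is compactly divergent. -/
def CompactlyDivergent {N : ℕ} (Ω : Set (CN N)) (f : ℕ → CN N → CN N) : Prop :=
  ∀ K : Set (CN N), K ⊆ Ω → IsCompact K → ∀ L : Set (CN N), L ⊆ Ω → IsCompact L →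
    ∃ l₀ : ℕ, ∀ l ≥ l₀, Disjoint (f l '' K) L

/-- The Möbius pseudodistance `c*_Ω(z, w)`. -/
def mobiusDist {N : ℕ} (Ω : Set (CN N)) (z w : CN N) : ℝ :=
  sSup {r : ℝ | ∃ F : CN N → ℂ, DifferentiableOn ℂ F Ω ∧ (∀ x ∈ Ω, ‖F x‖ < 1) ∧
    F w = 0 ∧ r = ‖F z‖}

/-- The Carathéodory pseudodistance `c_Ω(z, w)`. -/
def caratDist {N : ℕ} (Ω : Set (CN N)) (z w : CN N) : ℝ :=
  Real.log ((1 + mobiusDist Ω z w) / (1 - mobiusDist Ω z w))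

/-- `Ω` is a hypercyclic domain: the necessary conditions (c1), (c2), (c3) are
sufficient for hypercyclicity in `Ω`. -/
def HypercyclicDomain {N : ℕ} (Ω : Set (CN N)) : Prop :=
  ∀ φ : CN N → CN N, DifferentiableOn ℂ φ Ω → MapsTo φ Ω Ω →
    ∀ n : ℕ → ℕ, StrictMono n →
      InjOn φ Ω → RungeIn (φ '' Ω) Ω → RunAway Ω (fun l => φ^[n l]) →
        HypercyclicWrt Ω φ n

/-- A sequence of maps from a planar set `D` to `Ω ⊆ ℂ^N` is compactly divergent. -/
def CompactlyDivergentFrom {N : ℕ} (D : Set ℂ) (Ω : Set (CN N)) (f : ℕ → ℂ → CN N) : Prop :=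
  ∀ K : Set ℂ, K ⊆ D → IsCompact K → ∀ L : Set (CN N), L ⊆ Ω → IsCompact L →
    ∃ n₀ : ℕ, ∀ n ≥ n₀, Disjoint (f n '' K) L

/-- `Ω` is taut. -/
def Taut {N : ℕ} (Ω : Set (CN N)) : Prop :=
  ∀ f : ℕ → ℂ → CN N,
    (∀ n, DifferentiableOn ℂ (f n) (ball (0 : ℂ) 1)) →
    (∀ n, MapsTo (f n) (ball (0 : ℂ) 1) Ω) →
    CompactlyDivergentFrom (ball (0 : ℂ) 1) Ω f ∨
      ∃ k : ℕ → ℕ, StrictMono k ∧ ∃ g : ℂ → CN N,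
        DifferentiableOn ℂ g (ball (0 : ℂ) 1) ∧ MapsTo g (ball (0 : ℂ) 1) Ω ∧
        TendstoLocallyUniformlyOn (fun m => f (k m)) g atTop (ball (0 : ℂ) 1)


section ConvexDomain

variable {E : Type*} [NormedAddCommGroup E] [NormedSpace ℂ E] {Ω : Set E}

theorem exists_peak_function_of_convex (hΩo : IsOpen Ω) (hΩc : Convex ℝ Ω) {a : E} (ha : a ∉ Ω) :
    ∃ F : E → ℂ, DifferentiableOn ℂ F Ω ∧ (∀ z ∈ Ω, ‖F z‖ < 1) ∧
      Tendsto F (𝓝[Ω] a) (𝓝 1) := by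
  obtain ⟨g, hg⟩ := RCLike.geometric_hahn_banach_open_point (𝕜 := ℂ) hΩc hΩo ha
  refine ⟨fun z ↦ Complex.exp (g z - g a), by fun_prop, fun z hz ↦ ?_, ?_⟩
  · rw [Complex.norm_exp, Real.exp_lt_one_iff, Complex.sub_re, sub_neg]
    exact hg z hz
  · have : Continuous fun z ↦ Complex.exp (g z - g a) := by fun_prop
    simpa using (this.tendsto a).mono_left nhdsWithin_le_nhds

theorem one_add_norm_le_three_mul {f : E → ℂ} (hf : DifferentiableOn ℂ f Ω)
    (hre : ∀ w ∈ Ω, (f w).re ≤ 1) {c v : E}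
    (hcv : MapsTo (fun t : ℂ ↦ c + t • v) (ball 0 2) Ω) :
    1 + ‖f (c + v)‖ ≤ 3 * (1 + ‖f c‖) := by
  have hd : DifferentiableOn ℂ (fun t : ℂ ↦ f (c + t • v)) (ball 0 2) :=
    hf.comp (by fun_prop) hcv
  have := Complex.borelCaratheodory one_pos hd (fun t ht ↦ hre _ (hcv ht)) two_pos
    (z := 1) (by simp)
  norm_num at this
  linarith

theorem exists_one_add_norm_le_pow_mul (hΩo : IsOpen Ω) (hΩc : Convex ℝ Ω) {x y : E}
    (hx : x ∈ Ω) (hy : y ∈ Ω) :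
    ∃ n : ℕ, ∀ f : E → ℂ, DifferentiableOn ℂ f Ω → (∀ w ∈ Ω, (f w).re ≤ 1) →
      1 + ‖f y‖ ≤ 3 ^ n * (1 + ‖f x‖) := by
  set p : ℝ → E := fun t ↦ x + t • (y - x)
  have hK : IsCompact (p '' Icc 0 1) := isCompact_Icc.image (by fun_prop)
  have hKΩ : p '' Icc 0 1 ⊆ Ω := by
    rintro _ ⟨t, ht, rfl⟩
    exact hΩc.add_smul_sub_mem hx hy ht
  obtain ⟨δ, hδ, hδΩ⟩ := hK.exists_thickening_subset_open hΩo hKΩ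
  obtain ⟨n, hn⟩ := exists_nat_gt (2 * ‖y - x‖ / δ)
  have hn0 : (0 : ℝ) < n := lt_of_le_of_lt (by positivity) hn
  set v : E := (n : ℝ)⁻¹ • (y - x)
  have hstep : ∀ k < n, p ((k + 1) / n) = p (k / n) + v := fun k _ ↦ by
    simp only [p, v, add_div, add_smul, one_div]
    abel
  have hball : ∀ k < n, MapsTo (fun t : ℂ ↦ p (k / n) + t • v) (ball 0 2) Ω := by
    intro k hk t ht
    refine hδΩ (mem_thickening_iff.2 ⟨p (k / n), ⟨k / n, ⟨by positivity, ?_⟩, rfl⟩, ?_⟩)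
    · exact div_le_one_of_le₀ (by exact_mod_cast hk.le) hn0.le
    · rw [dist_eq_norm, add_sub_cancel_left, norm_smul, norm_smul, norm_inv, Real.norm_natCast]
      rw [div_lt_iff₀ hδ] at hn
      rw [mem_ball_zero_iff] at ht
      calc ‖t‖ * ((n : ℝ)⁻¹ * ‖y - x‖) ≤ 2 * ((n : ℝ)⁻¹ * ‖y - x‖) := by gcongr
        _ < δ := by rw [← mul_assoc, mul_comm 2, mul_assoc, inv_mul_lt_iff₀ hn0]; linarith
  refine ⟨n, fun f hf hre ↦ ?_⟩
  have hchain : ∀ k ≤ n, 1 + ‖f (p (k / n))‖ ≤ 3 ^ k * (1 + ‖f x‖) := by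
    intro k
    induction k with
    | zero => simp [p]
    | succ k ih =>
      intro hk
      have := one_add_norm_le_three_mul hf hre (hball k hk)
      push_cast
      rw [hstep k hk, pow_succ]
      nlinarith [ih (by omega)]
  simpa [p, hn0.ne'] using hchain n le_rfl

theorem exists_lt_one_forall_norm_le (hΩo : IsOpen Ω) (hΩc : Convex ℝ Ω) {x y : E}
    (hx : x ∈ Ω) (hy : y ∈ Ω) :
    ∃ γ < 1, ∀ F : E → ℂ, DifferentiableOn ℂ F Ω → (∀ w ∈ Ω, ‖F w‖ < 1) → F x = 0 →
      ‖F y‖ ≤ γ := by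
  obtain ⟨n, hn⟩ := exists_one_add_norm_le_pow_mul hΩo hΩc hx hy
  refine ⟨1 - (2 * 3 ^ n)⁻¹, sub_lt_self _ (by positivity), fun F hF hF1 hFx ↦ ?_⟩
  -- Rotate so that `ω F y = ‖F y‖`: a bound on `‖(1 - ω F y)⁻¹‖` then keeps `‖F y‖` away from `1`.
  obtain ⟨ω, hω, hωF⟩ : ∃ ω : ℂ, ‖ω‖ = 1 ∧ ω * F y = ‖F y‖ := by
    rcases eq_or_ne (F y) 0 with h | h
    · exact ⟨1, by simp [h]⟩
    · refine ⟨starRingEnd ℂ (F y) / ‖F y‖, by simp [h], ?_⟩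
      rw [div_mul_eq_mul_div, Complex.conj_mul', sq, mul_div_assoc, div_self (by simpa using h),
        mul_one]
  have hre : ∀ w ∈ Ω, 0 < (1 - ω * F w).re := fun w hw ↦ by
    have := (Complex.re_le_norm (ω * F w)).trans_lt (by simpa [hω] using hF1 w hw)
    simp only [Complex.sub_re, Complex.one_re]
    linarith
  have hne : ∀ w ∈ Ω, 1 - ω * F w ≠ 0 := fun w hw h ↦ by simpa [h] using hre w hw
  have hbound := hn (fun w ↦ -(1 - ω * F w)⁻¹) ((hF.const_mul ω).const_sub 1 |>.inv hne |>.neg)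
    fun w hw ↦ by
      rw [Complex.neg_re, Complex.inv_re]
      linarith [div_pos (hre w hw) (Complex.normSq_pos.2 (hne w hw))]
  have h1 : 0 < 1 - ‖F y‖ := sub_pos.2 (hF1 y hy)
  have hfy : ‖-(1 - ω * F y)⁻¹‖ = (1 - ‖F y‖)⁻¹ := by
    rw [hωF, norm_neg, norm_inv, ← Complex.ofReal_one, ← Complex.ofReal_sub, Complex.norm_real,
      Real.norm_of_nonneg h1.le]
  simp only [hfy, hFx, mul_zero, sub_zero, inv_one, norm_neg, norm_one] at hbound
  have := inv_le_of_inv_le₀ h1 (show (1 - ‖F y‖)⁻¹ ≤ 2 * 3 ^ n by linarith)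
  linarith

end ConvexDomain

theorem mul_sub_le_dist_mul_sub {V : Type*} [NormedAddCommGroup V] [NormedSpace ℝ V]
    (ℓ : V →ₗ[ℝ] ℝ) {x a : V} {r : ℝ} (hr : 0 ≤ r) (h : ∀ y ∈ closedBall x r, ℓ y < ℓ a) (z : V) :
    r * (ℓ a - ℓ z) ≤ dist z a * (ℓ a - ℓ x) := by
  rcases eq_or_ne z a with rfl | hza
  · simp
  have hd : 0 < ‖a - z‖ := norm_pos_iff.2 (sub_ne_zero.2 hza.symm)
  have := h (x + (r / ‖a - z‖) • (a - z)) (by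
    rw [mem_closedBall, dist_eq_norm, add_sub_cancel_left, norm_smul, Real.norm_eq_abs,
      abs_of_nonneg (by positivity), div_mul_cancel₀ _ hd.ne'])
  rw [map_add, map_smul, map_sub, smul_eq_mul, ← lt_sub_iff_add_lt', div_mul_eq_mul_div,
    div_lt_iff₀ hd] at this
  rw [dist_comm, dist_eq_norm]
  linarith

open scoped ComplexConjugate

namespace Complex

theorem normSq_add_conj_sub_normSq_sub (ζ p : ℂ) :
    normSq (ζ + conj p) - normSq (ζ - p) = 4 * (ζ.re * p.re) := by
  simp only [normSq_apply, add_re, add_im, sub_re, sub_im, conj_re, conj_im]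
  ring

theorem norm_sub_div_add_conj_lt_one {ζ p : ℂ} (hζ : ζ.re < 0) (hp : p.re < 0) :
    ‖(ζ - p) / (ζ + conj p)‖ < 1 := by
  have hne : ζ + conj p ≠ 0 := fun h ↦ by
    have := congrArg re h
    simp only [add_re, conj_re, zero_re] at this
    linarith
  rw [norm_div, div_lt_one (norm_pos_iff.2 hne), ← sq_lt_sq₀ (norm_nonneg _) (norm_nonneg _),
    Complex.sq_norm, Complex.sq_norm]
  nlinarith [normSq_add_conj_sub_normSq_sub ζ p]

theorem one_sub_norm_sub_div_add_conj_le {ζ p : ℂ} (hζ : ζ.re < 0) (hp : p.re < 0) :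
    1 - ‖(ζ - p) / (ζ + conj p)‖ ≤ 4 * ζ.re / p.re := by
  have hq : p.re ^ 2 ≤ normSq (ζ + conj p) := by
    rw [normSq_apply]
    simp only [add_re, add_im, conj_re, conj_im]
    nlinarith [sq_nonneg (ζ.im - p.im)]
  have hp2 : 0 < p.re ^ 2 := by nlinarith
  have hb2 : ‖(ζ - p) / (ζ + conj p)‖ ^ 2 * normSq (ζ + conj p) = normSq (ζ - p) := by
    rw [norm_div, div_pow, Complex.sq_norm, Complex.sq_norm, div_mul_cancel₀ _ (by linarith)]
  have hb := norm_sub_div_add_conj_lt_one hζ hp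
  set b := ‖(ζ - p) / (ζ + conj p)‖
  have hb0 : 0 ≤ b := norm_nonneg _
  have h3 : (1 - b) * normSq (ζ + conj p) ≤ (1 - b ^ 2) * normSq (ζ + conj p) := by
    nlinarith [mul_nonneg (mul_nonneg hb0 (sub_nonneg.2 hb.le)) (normSq_nonneg (ζ + conj p))]
  calc 1 - b ≤ 4 * (ζ.re * p.re) / p.re ^ 2 := by
        rw [le_div_iff₀ hp2]
        nlinarith [normSq_add_conj_sub_normSq_sub ζ p,
          mul_le_mul_of_nonneg_left hq (by linarith : (0:ℝ) ≤ 1 - b)]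
    _ = 4 * ζ.re / p.re := by field_simp

end Complex

theorem exists_one_sub_norm_le_of_re_lt {E : Type*} [NormedAddCommGroup E] [NormedSpace ℂ E]
    (g : E →L[ℂ] ℂ) {Ω : Set E} {a w : E} (hg : ∀ x ∈ Ω, (g x).re < (g a).re) (hw : w ∈ Ω) :
    ∃ B : E → ℂ, DifferentiableOn ℂ B Ω ∧ (∀ x ∈ Ω, ‖B x‖ < 1) ∧ B w = 0 ∧
      ∀ z ∈ Ω, 1 - ‖B z‖ ≤ 4 * ((g a).re - (g z).re) / ((g a).re - (g w).re) := by
  have hre : ∀ x ∈ Ω, (g x - g a).re < 0 := fun x hx ↦ by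
    rw [Complex.sub_re, sub_neg]
    exact hg x hx
  set p := g w - g a
  have hden : ∀ x ∈ Ω, g x - g a + conj p ≠ 0 := fun x hx h ↦ by
    have := congrArg Complex.re h
    simp only [Complex.add_re, Complex.conj_re, Complex.zero_re] at this
    linarith [hre x hx, hre w hw]
  refine ⟨fun x ↦ (g x - g a - p) / (g x - g a + conj p), ?_,
    fun x hx ↦ Complex.norm_sub_div_add_conj_lt_one (hre x hx) (hre w hw), by simp [p],
    fun z hz ↦ ?_⟩
  · simp only [div_eq_mul_inv]
    exact DifferentiableOn.mul (by fun_prop) (DifferentiableOn.inv (by fun_prop) hden)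
  · convert Complex.one_sub_norm_sub_div_add_conj_le (hre z hz) (hre w hw) using 1
    simp only [Complex.sub_re]
    rw [← neg_div_neg_eq]
    ring_nf

section MobiusDist

variable {N : ℕ} {Ω : Set (CN N)} {z w : CN N}

theorem le_mobiusDist (hz : z ∈ Ω) {F : CN N → ℂ} (hF : DifferentiableOn ℂ F Ω)
    (hF1 : ∀ x ∈ Ω, ‖F x‖ < 1) (hFw : F w = 0) : ‖F z‖ ≤ mobiusDist Ω z w :=
  le_csSup ⟨1, by rintro _ ⟨G, -, hG1, -, rfl⟩; exact (hG1 z hz).le⟩ ⟨F, hF, hF1, hFw, rfl⟩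

theorem mobiusDist_le {γ : ℝ}
    (h : ∀ F : CN N → ℂ, DifferentiableOn ℂ F Ω → (∀ x ∈ Ω, ‖F x‖ < 1) → F w = 0 → ‖F z‖ ≤ γ) :
    mobiusDist Ω z w ≤ γ :=
  csSup_le ⟨_, 0, differentiableOn_const 0, by simp, rfl, rfl⟩
    (by rintro _ ⟨F, hF, hF1, hFw, rfl⟩; exact h F hF hF1 hFw)

theorem mobiusDist_lt_one (hΩo : IsOpen Ω) (hΩc : Convex ℝ Ω) (hz : z ∈ Ω) (hw : w ∈ Ω) :
    mobiusDist Ω z w < 1 := by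
  obtain ⟨γ, hγ, hF⟩ := exists_lt_one_forall_norm_le hΩo hΩc hw hz
  exact (mobiusDist_le hF).trans_lt hγ

theorem one_sub_four_mul_dist_div_le_mobiusDist (hΩo : IsOpen Ω) (hΩc : Convex ℝ Ω) {a : CN N}
    (ha : a ∉ Ω) {r : ℝ} (hr : 0 < r) (hball : closedBall w r ⊆ Ω) (hz : z ∈ Ω) :
    1 - 4 * dist z a / r ≤ mobiusDist Ω z w := by
  obtain ⟨g, hg⟩ := RCLike.geometric_hahn_banach_open_point (𝕜 := ℂ) hΩc hΩo ha
  replace hg : ∀ x ∈ Ω, (g x).re < (g a).re := hg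
  have hw : w ∈ Ω := hball (mem_closedBall_self hr.le)
  obtain ⟨B, hB, hB1, hBw, hBz⟩ := exists_one_sub_norm_le_of_re_lt g hg hw
  have hdist := mul_sub_le_dist_mul_sub (Complex.reLm.comp ((g : CN N →ₗ[ℂ] ℂ).restrictScalars ℝ))
    hr.le (fun y hy ↦ hg y (hball hy)) z
  simp only [LinearMap.comp_apply, LinearMap.restrictScalars_apply, Complex.reLm_coe,
    ContinuousLinearMap.coe_coe] at hdist
  have hratio : 4 * ((g a).re - (g z).re) / ((g a).re - (g w).re) ≤ 4 * dist z a / r := by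
    rw [div_le_div_iff₀ (by linarith [hg w hw]) hr]
    nlinarith [hdist]
  calc 1 - 4 * dist z a / r ≤ ‖B z‖ := by linarith [hBz z hz]
    _ ≤ mobiusDist Ω z w := le_mobiusDist hz hB hB1 hBw

end MobiusDist

theorem exists_lt_one_forall_lt_log (M : ℝ) :
    ∃ β < 1, ∀ m, β < m → m < 1 → M < Real.log ((1 + m) / (1 - m)) := by
  have hE := Real.exp_pos M
  refine ⟨(Real.exp M - 1) / (Real.exp M + 1), by rw [div_lt_one (by linarith)]; linarith,
    fun m hβm hm ↦ ?_⟩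
  rw [div_lt_iff₀ (by linarith)] at hβm
  have hm' : 0 < 1 - m := by linarith
  rw [Real.lt_log_iff_exp_lt (div_pos (by nlinarith) hm'), lt_div_iff₀ hm']
  linarith

theorem isCompact_closure_diff_thickening_frontier {X : Type*} [PseudoMetricSpace X] [ProperSpace X]
    {s : Set X} (hs : Bornology.IsBounded s) (δ : ℝ) :
    IsCompact (closure s \ thickening δ (frontier s)) :=
  isCompact_of_isClosed_isBounded (isClosed_closure.sdiff isOpen_thickening)
    (hs.closure.subset sdiff_subset)

theorem closure_diff_thickening_frontier_subset_interior {X : Type*} [PseudoMetricSpace X]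
    (s : Set X) {δ : ℝ} (hδ : 0 < δ) : closure s \ thickening δ (frontier s) ⊆ interior s :=
  fun _ ⟨hx, hxδ⟩ ↦ by_contra fun h ↦ hxδ (self_subset_thickening hδ _ ⟨hx, h⟩)

theorem stmt_15 {N : ℕ} (Ω : Set (CN N)) (hdom : CNDomain Ω)
    (hbdd : Bornology.IsBounded Ω) (hconv : Convex ℝ Ω) :
    (∀ a ∈ frontier Ω, ∃ F : CN N → ℂ, DifferentiableOn ℂ F Ω ∧
      (∀ z ∈ Ω, ‖F z‖ < 1) ∧ Tendsto F (𝓝[Ω] a) (𝓝 (1 : ℂ))) ∧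
    (∀ z₀ ∈ Ω, ∀ M : ℝ, 0 < M → ∃ L : Set (CN N), L ⊆ Ω ∧ IsCompact L ∧
      ∀ z ∈ Ω \ L, M < caratDist Ω z z₀) := by
  have hΩo : IsOpen Ω := hdom.1
  have hfrontier : ∀ a ∈ frontier Ω, a ∉ Ω := fun a ha ↦ (hΩo.frontier_eq ▸ ha).2
  refine ⟨fun a ha ↦ exists_peak_function_of_convex hΩo hconv (hfrontier a ha),
    fun z₀ hz₀ M _ ↦ ?_⟩
  obtain ⟨r, hr, hball⟩ := nhds_basis_closedBall.mem_iff.1 (hΩo.mem_nhds hz₀)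
  obtain ⟨β, hβ, hlog⟩ := exists_lt_one_forall_lt_log M
  have hε : 0 < r * (1 - β) / 4 := by have := sub_pos.2 hβ; positivity
  refine ⟨closure Ω \ thickening (r * (1 - β) / 4) (frontier Ω),
    (closure_diff_thickening_frontier_subset_interior Ω hε).trans interior_subset,
    isCompact_closure_diff_thickening_frontier hbdd _, fun z ⟨hz, hzL⟩ ↦ ?_⟩
  obtain ⟨a, ha, hza⟩ := mem_thickening_iff.1 (by_contra fun h ↦ hzL ⟨subset_closure hz, h⟩)
  refine hlog _ ?_ (mobiusDist_lt_one hΩo hconv hz hz₀)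
  calc β < 1 - 4 * dist z a / r := by rw [lt_sub_comm, div_lt_iff₀ hr]; linarith
    _ ≤ mobiusDist Ω z z₀ :=
      one_sub_four_mul_dist_div_le_mobiusDist hΩo hconv (hfrontier a ha) hr hball hz
end
end

section
/- Let Ω ⊆ ℂ^N be a pseudoconvex domain and φ : Ω → Ω a holomorphic map. If C_φ is hereditarily hypercyclic with respect to some increasing arithmetic sequence (lμ + ν)_{l ∈ ℕ} of natural numbers (μ ∈ ℕ, μ ≥ 1, ν ∈ {0, …, μ − 1}), then C_φ is hereditarily hypercyclic (with respect to the full sequence n_l = l). -/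
open Set Filter Topology Metric

noncomputable section

/-!
Given a subsequence `k`, pigeonhole gives a further subsequence lying in one residue class
modulo `μ`, i.e. of the form `c i * μ + ν + s` with `c` strictly increasing. A function `f`
universal along `c i * μ + ν` is then universal along the shifted sequence, because the
functions `h ∘ φ^[s]` are dense in `O(Ω)`: universality along `(l + s) * μ + ν` approximates
any `g` by `f₀ ∘ φ^[(l + s) * μ + ν] = (f₀ ∘ φ^[(l + s) * μ + ν - s]) ∘ φ^[s]`.
-/

/-- The composition operator `C_ψ` has dense range in `O(Ω)` for the compact-open topology. -/
def CompDenseRange {N : ℕ} (Ω : Set (CN N)) (ψ : CN N → CN N) : Prop :=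
  ∀ g : CN N → ℂ, DifferentiableOn ℂ g Ω →
    ∀ K : Set (CN N), K ⊆ Ω → IsCompact K → ∀ ε : ℝ, 0 < ε →
      ∃ h : CN N → ℂ, DifferentiableOn ℂ h Ω ∧ ∀ z ∈ K, ‖h (ψ z) - g z‖ < ε

section Hypercyclic

variable {N : ℕ} {Ω : Set (CN N)} {φ : CN N → CN N} {n : ℕ → ℕ}

theorem HypercyclicWrt.of_comp {j : ℕ → ℕ} (h : HypercyclicWrt Ω φ (n ∘ j)) :
    HypercyclicWrt Ω φ n := by
  obtain ⟨f, hfd, hf⟩ := h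
  refine ⟨f, hfd, fun g hg K hKΩ hK ε hε => ?_⟩
  obtain ⟨l, hl⟩ := hf g hg K hKΩ hK ε hε
  exact ⟨j l, hl⟩

theorem HypercyclicWrt.compDenseRange_iterate (h : HypercyclicWrt Ω φ n)
    (hφd : DifferentiableOn ℂ φ Ω) (hφm : MapsTo φ Ω Ω) {s : ℕ} (hs : ∀ l, s ≤ n l) :
    CompDenseRange Ω (φ^[s]) := by
  obtain ⟨f, hfd, hf⟩ := h
  intro g hg K hKΩ hK ε hε
  obtain ⟨l, hl⟩ := hf g hg K hKΩ hK ε hε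
  refine ⟨f ∘ φ^[n l - s], hfd.comp (hφd.iterate hφm _) (hφm.iterate _), fun z hz => ?_⟩
  rw [Function.comp_apply, ← Function.iterate_add_apply, Nat.sub_add_cancel (hs l)]
  exact hl z hz

theorem HypercyclicWrt.add_const (h : HypercyclicWrt Ω φ n) (hφc : ContinuousOn φ Ω)
    (hφm : MapsTo φ Ω Ω) {s : ℕ} (hdense : CompDenseRange Ω (φ^[s])) :
    HypercyclicWrt Ω φ (fun l => n l + s) := by
  obtain ⟨f, hfd, hf⟩ := h
  refine ⟨f, hfd, fun g hg K hKΩ hK ε hε => ?_⟩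
  obtain ⟨u, hud, hu⟩ := hdense g hg K hKΩ hK (ε / 2) (half_pos hε)
  have hK' : IsCompact (φ^[s] '' K) :=
    hK.image_of_continuousOn ((hφc.iterate hφm s).mono hKΩ)
  obtain ⟨l, hl⟩ :=
    hf u hud _ ((hφm.iterate s).mono hKΩ Subset.rfl).image_subset hK' (ε / 2) (half_pos hε)
  refine ⟨l, fun z hz => ?_⟩
  have hfu := hl _ (mem_image_of_mem _ hz)
  rw [← Function.iterate_add_apply] at hfu
  calc ‖f (φ^[n l + s] z) - g z‖
      ≤ ‖f (φ^[n l + s] z) - u (φ^[s] z)‖ + ‖u (φ^[s] z) - g z‖ :=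
        norm_sub_le_norm_sub_add_norm_sub _ _ _
    _ < ε / 2 + ε / 2 := add_lt_add hfu (hu z hz)
    _ = ε := add_halves ε

end Hypercyclic

theorem StrictMono.exists_subseq_eq_mul_add_add {k : ℕ → ℕ} (hk : StrictMono k) {μ : ℕ}
    (hμ : 0 < μ) (ν : ℕ) :
    ∃ s : ℕ, ∃ j c : ℕ → ℕ, StrictMono j ∧ StrictMono c ∧ ∀ i, k (j i) = c i * μ + ν + s := by
  obtain ⟨r, hr⟩ := Finite.exists_infinite_fiber fun l => (⟨k l % μ, Nat.mod_lt _ hμ⟩ : Fin μ)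
  have hfreq : ∃ᶠ l in atTop, k l % μ = r ∧ ν ≤ k l :=
    ((Nat.frequently_atTop_iff_infinite.mpr (Set.infinite_coe_iff.mp hr)).mono
      fun l hl => congrArg Fin.val hl).and_eventually (hk.tendsto_atTop.eventually_ge_atTop ν)
  obtain ⟨j, hj, hjr⟩ := extraction_of_frequently_atTop hfreq
  have hdvd : ∀ i, μ ∣ k (j i) - k (j 0) := fun i =>
    (Nat.modEq_iff_dvd' (hk.monotone (hj.monotone (Nat.zero_le i)))).mp
      ((hjr 0).1.trans (hjr i).1.symm)
  have hkj : ∀ i, k (j i) = (k (j i) - k (j 0)) / μ * μ + ν + (k (j 0) - ν) := fun i => by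
    have := hk.monotone (hj.monotone (Nat.zero_le i))
    have := Nat.div_mul_cancel (hdvd i)
    have := (hjr 0).2
    omega
  refine ⟨k (j 0) - ν, j, fun i => (k (j i) - k (j 0)) / μ, hj, fun a b hab => ?_, hkj⟩
  have hlt := hk (hj hab)
  rw [hkj a, hkj b] at hlt
  exact Nat.lt_of_mul_lt_mul_right (Nat.lt_of_add_lt_add_right (Nat.lt_of_add_lt_add_right hlt))

theorem stmt_19_general {N : ℕ} (Ω : Set (CN N))
    (φ : CN N → CN N) (hφd : DifferentiableOn ℂ φ Ω) (hφm : MapsTo φ Ω Ω)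
    (μ ν : ℕ) (hμ : 1 ≤ μ)
    (hhyp : HereditarilyHypercyclicWrt Ω φ (fun l => l * μ + ν)) :
    HereditarilyHypercyclicWrt Ω φ (fun l => l) := by
  intro k hk
  obtain ⟨s, j, c, hj, hc, hkjc⟩ := hk.exists_subseq_eq_mul_add_add hμ ν
  have hdense : CompDenseRange Ω (φ^[s]) :=
    (hhyp (· + s) (strictMono_id.add_const s)).compDenseRange_iterate hφd hφm fun l =>
      show s ≤ (l + s) * μ + ν by nlinarith
  have hkj : HypercyclicWrt Ω φ (k ∘ j) := by
    simpa only [Function.comp_def, hkjc] using (hhyp c hc).add_const hφd.continuousOn hφm hdense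
  exact hkj.of_comp

theorem stmt_19 {N : ℕ} (Ω : Set (CN N)) (hdom : CNDomain Ω) (hpsc : Pseudoconvex Ω)
    (φ : CN N → CN N) (hφd : DifferentiableOn ℂ φ Ω) (hφm : MapsTo φ Ω Ω)
    (μ ν : ℕ) (hμ : 1 ≤ μ) (hν : ν < μ)
    (hhyp : HereditarilyHypercyclicWrt Ω φ (fun l => l * μ + ν)) :
    HereditarilyHypercyclicWrt Ω φ (fun l => l) :=
  stmt_19_general Ω φ hφd hφm μ ν hμ hhyp
end
end
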